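/- The measure μ_R on (0,1] with density φ_R(α) = (1/log 3)(1/(3−α) + 1/(1+α)) is invariant under the jump transformation R of T with respect to the interval (0,1/2], where R(α) := T^{τ(α)+1}(α) and τ(α) := min{j ≥ 0 : T^j(α) ∈ (0,1/2]}. -/

import Mathlib

/-
The inverse branches of `R` on `(0,1)` are the Möbius maps `ψ_{m,n}(x) = (n w + 1) / ((n+1) w + 1)`
with `w = m + 1 + x` for even `m` and `w = m + 2 - x` for odd `m`: a point with `τ = n` and
`T^n`-image in `(1/(m+3), 1/(m+2)]` is recovered from its `R`-image by undoing the branch of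
`T` of digit `m + 2` once and the branch `a ↦ 2 - 1/a` on `(1/2, 1]` `n` times. Their images
are pairwise disjoint, since `1 / (1 - ψ_{m,n}(x)) = n + 1 + 1/w` with `1/w ∈ (0,1)`, and outside
a countable set they cover `R⁻¹ A`. By the change of variables formula, invariance of `μ_R`
therefore reduces to `∑_{m,n} |ψ'_{m,n}| φ_R ∘ ψ_{m,n} = φ_R`, a double telescoping sum: the sum
over `n` is `(1/log 3)(1/w - 1/(w+2))`, and summing this over `m` gives `φ_R`.
-/

open MeasureTheory

/-- The probability measure `μ_R` on `(0,1]` with density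
`φ_R(α) = (1/log 3)(1/(3−α) + 1/(1+α))`. -/
noncomputable def muR : Measure ℝ :=
  (volume.restrict (Set.Ioc (0:ℝ) 1)).withDensity
    (fun α => ENNReal.ofReal ((1 / Real.log 3) * (1 / (3 - α) + 1 / (1 + α))))

open Set Filter Topology Function
open scoped ENNReal

theorem hasSum_sub_succ_of_antitone {f : ℕ → ℝ} (hf : Antitone f)
    (hlim : Tendsto f atTop (𝓝 0)) : HasSum (fun n => f n - f (n + 1)) (f 0) := by
  rw [hasSum_iff_tendsto_nat_of_nonneg fun n => sub_nonneg.2 (hf n.le_succ)]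
  simp only [Finset.sum_range_sub']
  simpa using tendsto_const_nhds.sub hlim

theorem hasSum_one_div_linear_sub {a b : ℝ} (ha : 0 < a) (hb : 0 < b) :
    HasSum (fun n : ℕ => 1 / (a * n + b) - 1 / (a * (n + 1) + b)) (1 / b) := by
  have hlin : Tendsto (fun n : ℕ => a * n + b) atTop atTop :=
    tendsto_atTop_add_const_right _ b
      ((tendsto_natCast_atTop_atTop (R := ℝ)).const_mul_atTop ha)
  have hanti : Antitone fun n : ℕ => 1 / (a * n + b) := fun m n hmn =>
    one_div_le_one_div_of_le (by positivity) (by gcongr)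
  have hlim : Tendsto (fun n : ℕ => 1 / (a * n + b)) atTop (𝓝 0) := by
    simp only [one_div]; exact hlin.inv_tendsto_atTop
  simpa using hasSum_sub_succ_of_antitone hanti hlim

theorem ENNReal.tsum_ofReal_of_hasSum {ι : Type*} {f : ι → ℝ} {a : ℝ} (hf : HasSum f a)
    (h0 : ∀ i, 0 ≤ f i) : ∑' i, ENNReal.ofReal (f i) = ENNReal.ofReal a := by
  rw [← ENNReal.ofReal_tsum_of_nonneg h0 hf.summable, hf.tsum_eq]

theorem lintegral_iUnion_image_eq_lintegral_tsum {ι : Type*} [Countable ι] {s : Set ℝ}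
    (hs : MeasurableSet s) {f f' : ι → ℝ → ℝ}
    (hf : ∀ i, ∀ x ∈ s, HasDerivWithinAt (f i) (f' i x) s x) (hinj : ∀ i, InjOn (f i) s)
    (hdisj : Pairwise (Disjoint on fun i => f i '' s)) {g : ℝ → ℝ≥0∞} (hg : Measurable g) :
    ∫⁻ y in ⋃ i, f i '' s, g y = ∫⁻ x in s, ∑' i, ENNReal.ofReal |f' i x| * g (f i x) := by
  have hcont i : ContinuousOn (f i) s := fun x hx => (hf i x hx).continuousWithinAt
  rw [lintegral_iUnion (fun i => hs.image_of_continuousOn_injOn (hcont i) (hinj i)) hdisj,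
    lintegral_tsum fun i => ?_]
  · exact tsum_congr fun i => lintegral_image_eq_lintegral_abs_deriv_mul hs (hf i) (hinj i) g
  · have hf' : AEMeasurable (f' i) (volume.restrict s) := by
      simpa [comp_def] using
        (ContinuousLinearMap.apply ℝ ℝ (1 : ℝ)).continuous.measurable.comp_aemeasurable
          (aemeasurable_fderivWithin volume hs fun x hx => (hf i x hx).hasFDerivWithinAt)
    exact (ENNReal.measurable_ofReal.comp_aemeasurable hf'.abs).mul
      (hg.comp_aemeasurable ((hcont i).aemeasurable hs))

theorem Nat.eq_of_mem_Ioo_of_mem_Ioo {a b : ℕ} {t : ℝ} (ha : t ∈ Ioo (a : ℝ) (a + 1))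
    (hb : t ∈ Ioo (b : ℝ) (b + 1)) : a = b := by
  have h1 : a < b + 1 := by exact_mod_cast ha.1.trans hb.2
  have h2 : b < a + 1 := by exact_mod_cast hb.1.trans ha.2
  omega

noncomputable section

namespace ECF

-- If `T y = x` with `y ∈ digitIoc m`, then `y = 1 / (branchW m x + 1)`.
def branchW (m : ℕ) (x : ℝ) : ℝ := if Even m then m + 1 + x else m + 2 - x

-- The `n`-th preimage of `1 / (w + 1)` under the branch `a ↦ 2 - 1 / a` of `T` on `(1/2, 1]`.
def mobius (n : ℕ) (w : ℝ) : ℝ := (n * w + 1) / ((n + 1) * w + 1)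

def invBranch (p : ℕ × ℕ) (x : ℝ) : ℝ := mobius p.2 (branchW p.1 x)

def digitIoc (m : ℕ) : Set ℝ := Ioc (1 / ((m : ℝ) + 3)) (1 / ((m : ℝ) + 2))

def density (x : ℝ) : ℝ := 1 / Real.log 3 * (1 / (3 - x) + 1 / (1 + x))

def IsFirstEntrance (T : ℝ → ℝ) (τ : ℝ → ℕ) : Prop :=
  ∀ α ∈ Ioc (0 : ℝ) 1, (∃ j : ℕ, T^[j] α ≤ 1 / 2) →
    T^[τ α] α ≤ 1 / 2 ∧ ∀ i < τ α, ¬ T^[i] α ≤ 1 / 2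

def jump (T : ℝ → ℝ) (τ : ℝ → ℕ) (α : ℝ) : ℝ := T^[τ α + 1] α

theorem branchW_two_mul (j : ℕ) (x : ℝ) : branchW (2 * j) x = 2 * j + (1 + x) := by
  rw [branchW, if_pos (even_two_mul j)]; push_cast; ring

theorem branchW_two_mul_add_one (j : ℕ) (x : ℝ) : branchW (2 * j + 1) x = 2 * j + (3 - x) := by
  rw [branchW, if_neg (Nat.not_even_two_mul_add_one j)]; push_cast; ring

theorem branchW_mem_Ioo (m : ℕ) {x : ℝ} (hx : x ∈ Ioo 0 1) :
    branchW m x ∈ Ioo ((m : ℝ) + 1) (m + 2) := by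
  unfold branchW; split_ifs <;> constructor <;> linarith [hx.1, hx.2]

theorem branchW_pos (m : ℕ) {x : ℝ} (hx : x ∈ Ioo 0 1) : 0 < branchW m x := by
  linarith [(branchW_mem_Ioo m hx).1, (Nat.cast_nonneg m : (0 : ℝ) ≤ m)]

theorem one_div_branchW_mem_Ioo (m : ℕ) {x : ℝ} (hx : x ∈ Ioo 0 1) :
    1 / branchW m x ∈ Ioo (0 : ℝ) 1 :=
  ⟨one_div_pos.2 (branchW_pos m hx), (div_lt_one (branchW_pos m hx)).2
    (by linarith [(branchW_mem_Ioo m hx).1, (m.cast_nonneg : (0 : ℝ) ≤ m)])⟩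

theorem branchW_injective (m : ℕ) : Injective (branchW m) := by
  intro x y h; unfold branchW at h; split_ifs at h <;> linarith

theorem hasDerivAt_branchW (m : ℕ) (x : ℝ) :
    HasDerivAt (branchW m) (if Even m then 1 else -1) x := by
  unfold branchW
  split_ifs
  · exact (hasDerivAt_id x).const_add _
  · simpa using (hasDerivAt_id x).const_sub _

section Mobius

variable {w : ℝ}

@[simp]
theorem mobius_zero (w : ℝ) : mobius 0 w = 1 / (w + 1) := by simp [mobius]

theorem mobius_mem_Ioc (hw : 0 < w) (n : ℕ) : mobius n w ∈ Ioc 0 1 := by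
  have hn : (0 : ℝ) ≤ n := n.cast_nonneg
  unfold mobius
  constructor
  · positivity
  · rw [div_le_one (by positivity)]; linarith

theorem one_half_lt_mobius_succ (hw : 0 < w) (n : ℕ) : 1 / 2 < mobius (n + 1) w := by
  have hn : (0 : ℝ) ≤ n := n.cast_nonneg
  unfold mobius
  rw [div_lt_div_iff₀ two_pos (by positivity)]
  push_cast; nlinarith

theorem two_sub_one_div_mobius_succ (hw : 0 < w) (n : ℕ) :
    2 - 1 / mobius (n + 1) w = mobius n w := by
  have hn : (0 : ℝ) ≤ n := n.cast_nonneg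
  have hD : (n + 1) * w + 1 ≠ 0 := by positivity
  unfold mobius
  rw [one_div_div, eq_div_iff hD]
  push_cast
  field_simp
  ring

theorem one_div_one_sub_mobius (hw : 0 < w) (n : ℕ) :
    1 / (1 - mobius n w) = n + 1 + 1 / w := by
  have hn : (0 : ℝ) ≤ n := n.cast_nonneg
  unfold mobius
  rw [one_sub_div (by positivity), one_div_div, div_eq_iff (by ring_nf; positivity)]
  field_simp
  ring

theorem hasDerivAt_mobius (hw : 0 < w) (n : ℕ) :
    HasDerivAt (mobius n) (-1 / ((n + 1) * w + 1) ^ 2) w := by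
  have hD : (n + 1) * w + 1 ≠ 0 := by positivity
  refine (((hasDerivAt_id' w).const_mul (n : ℝ)).add_const 1).div
    (((hasDerivAt_id' w).const_mul ((n : ℝ) + 1)).add_const 1) hD |>.congr_deriv ?_
  field_simp
  ring

theorem hasSum_density_mobius (hw : 0 < w) :
    HasSum (fun n : ℕ => 1 / ((n + 1) * w + 1) ^ 2 * density (mobius n w))
      (1 / Real.log 3 * (1 / w - 1 / (w + 2))) := by
  have hterm (n : ℕ) : 1 / ((n + 1) * w + 1) ^ 2 * density (mobius n w) = 2 / w / Real.log 3 *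
      (1 / (2 * w * n + (w + 2)) - 1 / (2 * w * (n + 1) + (w + 2))) := by
    have hn : (0 : ℝ) ≤ n := n.cast_nonneg
    have h3 : 3 - mobius n w = ((2 * n + 3) * w + 2) / ((n + 1) * w + 1) := by
      unfold mobius; field_simp; ring
    have h1 : 1 + mobius n w = ((2 * n + 1) * w + 2) / ((n + 1) * w + 1) := by
      unfold mobius; field_simp; ring
    rw [density, h3, h1]
    field_simp
    ring
  have hsum : 1 / Real.log 3 * (1 / w - 1 / (w + 2)) = 2 / w / Real.log 3 * (1 / (w + 2)) := by
    field_simp; ring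
  simp_rw [hterm, hsum]
  exact (hasSum_one_div_linear_sub (by positivity) (by positivity)).mul_left _

end Mobius

theorem density_pos {x : ℝ} (hx : x ∈ Ioo (-1) 3) : 0 < density x := by
  have h3 : 0 < 3 - x := by linarith [hx.2]
  have h1 : 0 < 1 + x := by linarith [hx.1]
  have := Real.log_pos (by norm_num : (1 : ℝ) < 3)
  unfold density
  positivity

theorem hasSum_density_branchW {x : ℝ} (hx : x ∈ Ioo 0 1) :
    HasSum (fun m => 1 / Real.log 3 * (1 / branchW m x - 1 / (branchW m x + 2))) (density x) := by
  have h1 : 0 < 1 + x := by linarith [hx.1]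
  have h3 : 0 < 3 - x := by linarith [hx.2]
  have heven (j : ℕ) : 1 / branchW (2 * j) x - 1 / (branchW (2 * j) x + 2) =
      1 / (2 * j + (1 + x)) - 1 / (2 * (j + 1) + (1 + x)) := by
    rw [branchW_two_mul]; ring_nf
  have hodd (j : ℕ) : 1 / branchW (2 * j + 1) x - 1 / (branchW (2 * j + 1) x + 2) =
      1 / (2 * j + (3 - x)) - 1 / (2 * (j + 1) + (3 - x)) := by
    rw [branchW_two_mul_add_one]; ring_nf
  have hsum : density x = 1 / Real.log 3 * (1 / (1 + x)) + 1 / Real.log 3 * (1 / (3 - x)) := by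
    unfold density; ring
  rw [hsum]
  refine HasSum.even_add_odd ?_ ?_
  · simp_rw [heven]
    exact (hasSum_one_div_linear_sub two_pos h1).mul_left _
  · simp_rw [hodd]
    exact (hasSum_one_div_linear_sub two_pos h3).mul_left _

theorem invBranch_mem_Ioc (p : ℕ × ℕ) {x : ℝ} (hx : x ∈ Ioo 0 1) : invBranch p x ∈ Ioc 0 1 :=
  mobius_mem_Ioc (branchW_pos p.1 hx) p.2

theorem one_div_one_sub_invBranch (p : ℕ × ℕ) {x : ℝ} (hx : x ∈ Ioo 0 1) :
    1 / (1 - invBranch p x) = p.2 + 1 + 1 / branchW p.1 x :=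
  one_div_one_sub_mobius (branchW_pos p.1 hx) p.2

theorem invBranch_injOn (p : ℕ × ℕ) : InjOn (invBranch p) (Ioo 0 1) := by
  intro x hx x' hx' h
  have key := congrArg (fun t => 1 / (1 - t)) h
  simp only [one_div_one_sub_invBranch p hx, one_div_one_sub_invBranch p hx', add_right_inj,
    one_div, inv_inj] at key
  exact branchW_injective p.1 key

theorem pairwise_disjoint_invBranch_image :
    Pairwise (Disjoint on fun p => invBranch p '' Ioo 0 1) := by
  rintro ⟨m, n⟩ ⟨m', n'⟩ hne
  refine disjoint_left.2 ?_
  rintro _ ⟨x, hx, rfl⟩ ⟨x', hx', h⟩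
  have key := congrArg (fun t => 1 / (1 - t)) h
  simp only [one_div_one_sub_invBranch _ hx, one_div_one_sub_invBranch _ hx'] at key
  have hw := branchW_mem_Ioo m hx
  have hw' := branchW_mem_Ioo m' hx'
  have hinv := one_div_branchW_mem_Ioo m hx
  have hinv' := one_div_branchW_mem_Ioo m' hx'
  obtain rfl : n' = n := Nat.eq_of_mem_Ioo_of_mem_Ioo (t := n' + 1 / branchW m' x')
    ⟨by linarith [hinv'.1], by linarith [hinv'.2]⟩ ⟨by linarith [hinv.1], by linarith [hinv.2]⟩
  have hww : branchW m' x' = branchW m x := by simpa using key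
  obtain rfl : m' = m := Nat.eq_of_mem_Ioo_of_mem_Ioo (t := branchW m' x' - 1)
    ⟨by linarith [hw'.1], by linarith [hw'.2]⟩ ⟨by linarith [hw.1], by linarith [hw.2]⟩
  exact hne rfl

theorem hasDerivAt_invBranch (p : ℕ × ℕ) {x : ℝ} (hx : x ∈ Ioo 0 1) :
    HasDerivAt (invBranch p)
      (-1 / ((p.2 + 1) * branchW p.1 x + 1) ^ 2 * if Even p.1 then 1 else -1) x :=
  (hasDerivAt_mobius (branchW_pos p.1 hx) p.2).comp x (hasDerivAt_branchW p.1 x)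

theorem abs_deriv_invBranch (m n : ℕ) {x : ℝ} (hx : x ∈ Ioo 0 1) :
    |deriv (invBranch (m, n)) x| = 1 / ((n + 1) * branchW m x + 1) ^ 2 := by
  rw [(hasDerivAt_invBranch (m, n) hx).deriv, abs_mul, abs_div, abs_neg, abs_one,
    abs_of_nonneg (sq_nonneg _)]
  split_ifs <;> simp

theorem tsum_abs_deriv_invBranch_mul_density {x : ℝ} (hx : x ∈ Ioo 0 1) :
    ∑' p : ℕ × ℕ, ENNReal.ofReal |deriv (invBranch p) x| * ENNReal.ofReal (density (invBranch p x))
      = ENNReal.ofReal (density x) := by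
  have hdens (p : ℕ × ℕ) : 0 < density (invBranch p x) := by
    have := invBranch_mem_Ioc p hx
    exact density_pos ⟨by linarith [this.1], by linarith [this.2]⟩
  rw [ENNReal.tsum_prod']
  simp_rw [← ENNReal.ofReal_mul (abs_nonneg _), abs_deriv_invBranch _ _ hx]
  rw [← ENNReal.tsum_ofReal_of_hasSum (hasSum_density_branchW hx)]
  · congr 1 with m
    refine ENNReal.tsum_ofReal_of_hasSum (hasSum_density_mobius (branchW_pos m hx)) fun n => ?_
    have := hdens (m, n)
    positivity
  · intro m
    have hw := branchW_pos m hx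
    have := Real.log_pos (by norm_num : (1 : ℝ) < 3)
    have : 1 / (branchW m x + 2) ≤ 1 / branchW m x := one_div_le_one_div_of_le hw (by linarith)
    have : 0 ≤ 1 / branchW m x - 1 / (branchW m x + 2) := by linarith
    positivity

theorem muR_apply_of_subset {S : Set ℝ} (hS : S ⊆ Ioc 0 1) :
    muR S = ∫⁻ x in S, ENNReal.ofReal (density x) := by
  rw [muR, withDensity_apply', Measure.restrict_restrict' measurableSet_Ioc,
    inter_eq_self_of_subset_left hS]
  rfl

theorem muR_absolutelyContinuous : muR ≪ volume :=
  (withDensity_absolutelyContinuous _ _).trans Measure.restrict_le_self.absolutelyContinuous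

theorem muR_iUnion_invBranch_image {A : Set ℝ} (hA : MeasurableSet A) (hA₀ : A ⊆ Ioo 0 1) :
    muR (⋃ p, invBranch p '' A) = muR A := by
  have himage : ⋃ p, invBranch p '' A ⊆ Ioc 0 1 :=
    iUnion_subset fun p => image_subset_iff.2 fun x hx => invBranch_mem_Ioc p (hA₀ hx)
  rw [muR_apply_of_subset himage, muR_apply_of_subset (hA₀.trans Ioo_subset_Ioc_self),
    lintegral_iUnion_image_eq_lintegral_tsum hA
      (fun p x hx =>
        (hasDerivAt_invBranch p (hA₀ hx)).differentiableAt.hasDerivAt.hasDerivWithinAt)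
      (fun p => (invBranch_injOn p).mono hA₀)
      (pairwise_disjoint_invBranch_image.mono fun _ _ =>
        Disjoint.mono (image_mono hA₀) (image_mono hA₀))
      (by unfold density; fun_prop)]
  exact setLIntegral_congr_fun hA fun x hx => tsum_abs_deriv_invBranch_mul_density (hA₀ hx)

section Dynamics

variable {T : ℝ → ℝ}

theorem eq_two_sub_one_div_of_mem_Ioc
    (hT1 : ∀ k : ℕ, 1 ≤ k → ∀ α ∈ Ioc (1 / (2 * (k : ℝ))) (1 / (2 * (k : ℝ) - 1)),
      T α = 2 * k - 1 / α) {a : ℝ} (ha : a ∈ Ioc (1 / 2) 1) : T a = 2 - 1 / a := by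
  simpa using hT1 1 le_rfl a (by norm_num; exact ha)

theorem branchW_apply_add_one
    (hT1 : ∀ k : ℕ, 1 ≤ k → ∀ α ∈ Ioc (1 / (2 * (k : ℝ))) (1 / (2 * (k : ℝ) - 1)),
      T α = 2 * k - 1 / α)
    (hT2 : ∀ k : ℕ, 1 ≤ k → ∀ α ∈ Ioc (1 / (2 * (k : ℝ) + 1)) (1 / (2 * (k : ℝ))),
      T α = 1 / α - 2 * k)
    (m : ℕ) {y : ℝ} (hy : y ∈ digitIoc m) : branchW m (T y) + 1 = 1 / y := by
  unfold digitIoc at hy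
  obtain ⟨j, rfl | rfl⟩ := Nat.even_or_odd' m
  · have hT := hT2 (j + 1) (by omega) y (by convert hy using 3 <;> push_cast <;> ring)
    rw [branchW_two_mul, hT]; push_cast; ring
  · have hT := hT1 (j + 2) (by omega) y (by convert hy using 3 <;> push_cast <;> ring)
    rw [branchW_two_mul_add_one, hT]; push_cast; ring

theorem digitIoc_subset_Ioc (m : ℕ) : digitIoc m ⊆ Ioc 0 (1 / 2) := by
  have hm : (0 : ℝ) ≤ m := m.cast_nonneg
  exact fun y hy => ⟨(one_div_pos.2 (by linarith)).trans hy.1,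
    hy.2.trans (one_div_le_one_div_of_le two_pos (by linarith))⟩

theorem exists_mem_digitIoc {y : ℝ} (hy : y ∈ Ioc 0 (1 / 2)) : ∃ m, y ∈ digitIoc m := by
  obtain ⟨hy0, hy2⟩ := hy
  have h2 : 2 ≤ 1 / y := by rw [le_div_iff₀ hy0]; linarith
  have hL : 2 ≤ ⌊1 / y⌋₊ := Nat.le_floor (by exact_mod_cast h2)
  have hfloor := Nat.floor_le (zero_le_two.trans h2)
  have hfloor' := Nat.lt_floor_add_one (1 / y)
  refine ⟨⌊1 / y⌋₊ - 2, ?_, ?_⟩ <;> push_cast [hL]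
  · rw [one_div_lt (by linarith) hy0]; linarith
  · rw [le_one_div hy0 (by linarith)]; linarith

theorem one_div_branchW_add_one_mem_digitIoc (m : ℕ) {x : ℝ} (hx : x ∈ Ioo 0 1) :
    1 / (branchW m x + 1) ∈ digitIoc m := by
  have hw := branchW_mem_Ioo m hx
  have hm : (0 : ℝ) ≤ m := m.cast_nonneg
  exact ⟨one_div_lt_one_div_of_lt (by linarith [hw.1]) (by linarith [hw.2]),
    one_div_le_one_div_of_le (by linarith) (by linarith [hw.1])⟩

theorem iterate_mobius (hunit : ∀ a ∈ Ioc (1 / 2 : ℝ) 1, T a = 2 - 1 / a) {w : ℝ} (hw : 0 < w)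
    (n i : ℕ) : T^[i] (mobius (n + i) w) = mobius n w := by
  induction i with
  | zero => rfl
  | succ i ih =>
    rw [iterate_succ_apply, ← add_assoc,
      hunit _ ⟨one_half_lt_mobius_succ hw _, (mobius_mem_Ioc hw _).2⟩,
      two_sub_one_div_mobius_succ hw, ih]

theorem eq_mobius_of_iterate_eq (hunit : ∀ a ∈ Ioc (1 / 2 : ℝ) 1, T a = 2 - 1 / a) {w : ℝ}
    (hw : 0 < w) (n : ℕ) {α : ℝ} (hα : ∀ i < n, T^[i] α ∈ Ioc (1 / 2 : ℝ) 1)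
    (hn : T^[n] α = mobius 0 w) : α = mobius n w := by
  induction n generalizing α with
  | zero => exact hn
  | succ n ih =>
    have hTα : T α = mobius n w :=
      ih (fun i hi => by simpa only [iterate_succ_apply] using hα (i + 1) (by omega)) hn
    rw [hunit α (hα 0 n.succ_pos), ← two_sub_one_div_mobius_succ hw] at hTα
    simpa using hTα

theorem iterate_mem_Ioc (hunit : ∀ a ∈ Ioc (1 / 2 : ℝ) 1, T a = 2 - 1 / a) {α : ℝ}
    (hα : α ∈ Ioc 0 1) {n : ℕ} (hn : ∀ i < n, ¬ T^[i] α ≤ 1 / 2) :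
    ∀ i ≤ n, T^[i] α ∈ Ioc 0 1 := by
  intro i
  induction i with
  | zero => intro; exact hα
  | succ i ih =>
    intro hi
    have ha : 1 / 2 < T^[i] α := not_le.1 (hn i (by omega))
    have ha1 : T^[i] α ≤ 1 := (ih (by omega)).2
    have hinv : 1 ≤ 1 / T^[i] α := by rw [le_div_iff₀ (by linarith)]; linarith
    have hinv' : 1 / T^[i] α < 2 := by rw [div_lt_iff₀ (by linarith)]; linarith
    rw [iterate_succ_apply', hunit _ ⟨ha, ha1⟩]
    constructor <;> linarith

theorem jump_invBranch (hunit : ∀ a ∈ Ioc (1 / 2 : ℝ) 1, T a = 2 - 1 / a)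
    (hdigit : ∀ m : ℕ, ∀ y ∈ digitIoc m, branchW m (T y) + 1 = 1 / y) {τ : ℝ → ℕ}
    (hτ : IsFirstEntrance T τ) (p : ℕ × ℕ) {x : ℝ} (hx : x ∈ Ioo 0 1) :
    jump T τ (invBranch p x) = x := by
  obtain ⟨m, n⟩ := p
  set w := branchW m x
  have hw : 0 < w := branchW_pos m hx
  have hy := one_div_branchW_add_one_mem_digitIoc m hx
  have hTy : T (mobius 0 w) = x :=
    branchW_injective m (by simpa [one_div_one_div] using hdigit m _ hy)
  have hn : T^[n] (mobius n w) = mobius 0 w := by simpa using iterate_mobius hunit hw 0 n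
  have hhit : T^[n] (mobius n w) ≤ 1 / 2 := by
    rw [hn, mobius_zero]; exact (digitIoc_subset_Ioc m hy).2
  have hbefore : ∀ i < n, ¬ T^[i] (mobius n w) ≤ 1 / 2 := by
    intro i hi
    obtain ⟨k, rfl⟩ : ∃ k, n = k + 1 + i := ⟨n - i - 1, by omega⟩
    rw [iterate_mobius hunit hw]
    exact not_le.2 (one_half_lt_mobius_succ hw k)
  obtain ⟨hτ₁, hτ₂⟩ := hτ _ (mobius_mem_Ioc hw n) ⟨n, hhit⟩
  have hτn : τ (invBranch (m, n) x) = n :=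
    le_antisymm (not_lt.1 fun h => hτ₂ _ h hhit) (not_lt.1 fun h => hbefore _ h hτ₁)
  rw [jump, hτn, iterate_succ_apply', invBranch, hn, hTy]

theorem exists_eq_invBranch_jump (hunit : ∀ a ∈ Ioc (1 / 2 : ℝ) 1, T a = 2 - 1 / a)
    (hdigit : ∀ m : ℕ, ∀ y ∈ digitIoc m, branchW m (T y) + 1 = 1 / y) {τ : ℝ → ℕ}
    (hτ : IsFirstEntrance T τ) {α : ℝ} (hα : α ∈ Ioc 0 1) (hex : ∃ j : ℕ, T^[j] α ≤ 1 / 2) :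
    ∃ m, α = invBranch (m, τ α) (jump T τ α) := by
  obtain ⟨hhit, hbefore⟩ := hτ α hα hex
  have horbit := iterate_mem_Ioc hunit hα hbefore
  obtain ⟨m, hm⟩ := exists_mem_digitIoc ⟨(horbit _ le_rfl).1, hhit⟩
  have hw : branchW m (jump T τ α) + 1 = 1 / T^[τ α] α := by
    rw [jump, iterate_succ_apply']; exact hdigit m _ hm
  have hw0 : 0 < branchW m (jump T τ α) := by
    obtain ⟨hy0, hy2⟩ := digitIoc_subset_Ioc m hm
    linarith [(le_one_div two_pos hy0).2 hy2]
  refine ⟨m, eq_mobius_of_iterate_eq hunit hw0 _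
    (fun i hi => ⟨not_le.1 (hbefore i hi), (horbit i hi.le).2⟩) ?_⟩
  rw [mobius_zero, hw, one_div_one_div]

theorem iUnion_invBranch_image_subset (hunit : ∀ a ∈ Ioc (1 / 2 : ℝ) 1, T a = 2 - 1 / a)
    (hdigit : ∀ m : ℕ, ∀ y ∈ digitIoc m, branchW m (T y) + 1 = 1 / y) {τ : ℝ → ℕ}
    (hτ : IsFirstEntrance T τ) (A : Set ℝ) :
    ⋃ p, invBranch p '' (A ∩ Ioo 0 1) ⊆ jump T τ ⁻¹' A ∩ Ioc 0 1 := by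
  refine iUnion_subset fun p => ?_
  rintro _ ⟨x, ⟨hxA, hx⟩, rfl⟩
  refine ⟨?_, invBranch_mem_Ioc p hx⟩
  rwa [mem_preimage, jump_invBranch hunit hdigit hτ p hx]

-- The point `1` is set aside because there the branches `(m, n)` and `(m + 1, n)`, `m` even, agree.
theorem preimage_jump_diff_subset (hunit : ∀ a ∈ Ioc (1 / 2 : ℝ) 1, T a = 2 - 1 / a)
    (hdigit : ∀ m : ℕ, ∀ y ∈ digitIoc m, branchW m (T y) + 1 = 1 / y) {τ : ℝ → ℕ}
    (hτ : IsFirstEntrance T τ) {A : Set ℝ} (hA : A ⊆ Ioc 0 1) :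
    (jump T τ ⁻¹' A ∩ Ioc 0 1) \ ⋃ p, invBranch p '' (A ∩ Ioo 0 1) ⊆
      {α ∈ Ioc 0 1 | ¬ ∃ j : ℕ, T^[j] α ≤ 1 / 2} ∪ range fun p => invBranch p 1 := by
  rintro α ⟨⟨hRα, hα⟩, hnot⟩
  by_cases hex : ∃ j : ℕ, T^[j] α ≤ 1 / 2
  · obtain ⟨m, hm⟩ := exists_eq_invBranch_jump hunit hdigit hτ hα hex
    rcases eq_or_ne (jump T τ α) 1 with h1 | h1
    · exact Or.inr ⟨(m, τ α), (congrArg (invBranch (m, τ α)) h1).symm.trans hm.symm⟩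
    · exact (hnot (mem_iUnion.2 ⟨(m, τ α), jump T τ α,
        ⟨hRα, (hA hRα).1, lt_of_le_of_ne (hA hRα).2 h1⟩, hm.symm⟩)).elim
  · exact Or.inl ⟨hα, hex⟩

end Dynamics

end ECF

end

open ECF

/-- `μ_R` is invariant under the jump transformation `R(α) = T^{τ(α)+1}(α)` of the
even-continued-fraction map `T` with respect to the interval `(0,1/2]`, where
`τ(α) = min{j ≥ 0 : T^j(α) ≤ 1/2}` (defined outside a countable exceptional set). -/
theorem muR_invariant_under_R (T R : ℝ → ℝ) (τ : ℝ → ℕ)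
    (hT1 : ∀ k : ℕ, 1 ≤ k → ∀ α ∈ Set.Ioc (1 / (2 * (k:ℝ))) (1 / (2 * (k:ℝ) - 1)),
      T α = 2 * (k:ℝ) - 1 / α)
    (hT2 : ∀ k : ℕ, 1 ≤ k → ∀ α ∈ Set.Ioc (1 / (2 * (k:ℝ) + 1)) (1 / (2 * (k:ℝ))),
      T α = 1 / α - 2 * (k:ℝ))
    (hτ : ∀ α ∈ Set.Ioc (0:ℝ) 1, (∃ j : ℕ, T^[j] α ≤ 1 / 2) →
      (T^[τ α] α ≤ 1 / 2 ∧ ∀ i < τ α, ¬ T^[i] α ≤ 1 / 2))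
    (hR : ∀ α, R α = T^[τ α + 1] α)
    (hE : Set.Countable {α ∈ Set.Ioc (0:ℝ) 1 |
      (∃ j : ℕ, T^[j] α = 0) ∨ ¬ ∃ j : ℕ, T^[j] α ≤ 1 / 2}) :
    ∀ A : Set ℝ, MeasurableSet A → A ⊆ Set.Ioc 0 1 →
      muR (R ⁻¹' A ∩ Set.Ioc 0 1) = muR A := by
  intro A hA hsub
  obtain rfl : R = jump T τ := funext hR
  have hunit (a : ℝ) (ha : a ∈ Ioc (1 / 2 : ℝ) 1) := eq_two_sub_one_div_of_mem_Ioc hT1 ha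
  have hdigit := branchW_apply_add_one hT1 hT2
  have hexc :
      muR ({α ∈ Ioc 0 1 | ¬ ∃ j : ℕ, T^[j] α ≤ 1 / 2} ∪ range fun p => invBranch p 1) = 0 := by
    refine muR_absolutelyContinuous ((Countable.union ?_ (countable_range _)).measure_zero volume)
    refine hE.mono fun α hα => ?_
    exact ⟨hα.1, Or.inr hα.2⟩
  have hone : muR (A \ (A ∩ Ioo 0 1)) = 0 := by
    refine muR_absolutelyContinuous (measure_mono_null ?_ (measure_singleton 1))
    rintro a ⟨haA, hna⟩
    exact le_antisymm (hsub haA).2 (not_lt.1 fun h => hna ⟨haA, (hsub haA).1, h⟩)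
  calc muR (jump T τ ⁻¹' A ∩ Ioc 0 1)
      = muR (⋃ p, invBranch p '' (A ∩ Ioo 0 1)) :=
        (measure_eq_measure_of_null_sdiff (iUnion_invBranch_image_subset hunit hdigit hτ A)
          (measure_mono_null (preimage_jump_diff_subset hunit hdigit hτ hsub) hexc)).symm
    _ = muR (A ∩ Ioo 0 1) :=
        muR_iUnion_invBranch_image (hA.inter measurableSet_Ioo) inter_subset_right
    _ = muR A := measure_eq_measure_of_null_sdiff inter_subset_left hone
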